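/- Suppose Pr₀(λ⁺, λ⁺, 2, ω) holds for a regular uncountable cardinal λ. Then a λ⁺-Gross space of dimension λ⁺ exists over every field of size at most λ: defining Φ(e_α, e_β) = c{α,β} (interpreting the colors 0,1 as field elements 0,1) for a colouring c witnessing Pr₀, the resulting symmetric bilinear space has the property that every subspace of dimension λ⁺ has orthogonal complement of dimension < λ⁺. -/

import Mathlib

/-!
Suppose `U` and `U⊥` both have dimension `λ⁺`. Vectors supported below `γ < λ⁺` form a space of
dimension `< λ⁺`, so for every `γ` there are nonzero `u_γ ∈ U` and `w_γ ∈ U⊥` supported above `γ`.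
Only countably many patterns (size of `supp w_γ ∪ supp u_γ`, position in it of a point of
`supp w_γ` and of a point of `supp u_γ`) occur, so by regularity of `λ⁺` one pattern occurs
cofinally, and a transfinite recursion picks `λ⁺` of these `γ` whose supports lie in pairwise
disjoint, increasing blocks. `Pr₀`, applied to the increasing enumerations of the blocks and to
the colouring that is `1` exactly at the two chosen positions, gives `ν₁ < ν₂` for which
`Φ(w_{ν₁}, u_{ν₂})` is the product of two nonzero coefficients, contradicting orthogonality.
-/

open Cardinal

universe u v

/-- The orthogonal complement of a subspace with respect to a bilinear form. -/
def ortho {F : Type*} {E : Type*} [Field F] [AddCommGroup E] [Module F E]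
    (Φ : E →ₗ[F] E →ₗ[F] F) (U : Submodule F E) : Submodule F E where
  carrier := {x | ∀ y ∈ U, Φ x y = 0}
  add_mem' := by
    intro a b ha hb y hy
    simp [map_add, ha y hy, hb y hy]
  zero_mem' := by
    intro y hy; simp
  smul_mem' := by
    intro c x hx y hy
    simp [hx y hy]

section Gram

variable {ι R : Type*} [CommSemiring R]

noncomputable def bilinOfGram (B : ι → ι → R) : (ι →₀ R) →ₗ[R] (ι →₀ R) →ₗ[R] R :=
  Finsupp.linearCombination R fun i => Finsupp.linearCombination R (B i)

@[simp]
theorem bilinOfGram_single (B : ι → ι → R) (i j : ι) (r s : R) :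
    bilinOfGram B (Finsupp.single i r) (Finsupp.single j s) = r * s * B i j := by
  simp [bilinOfGram, mul_assoc]

theorem bilinOfGram_apply (B : ι → ι → R) (x y : ι →₀ R) :
    bilinOfGram B x y = x.sum fun i r => y.sum fun j s => r * s * B i j := by
  simp [bilinOfGram, Finsupp.linearCombination_apply, Finsupp.sum, Finset.mul_sum, mul_assoc]

theorem bilinOfGram_comm {B : ι → ι → R} (hB : ∀ i j, B i j = B j i) (x y : ι →₀ R) :
    bilinOfGram B x y = bilinOfGram B y x := by
  rw [bilinOfGram_apply, bilinOfGram_apply, Finsupp.sum_comm]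
  simp only [hB, mul_comm]

theorem bilinOfGram_eq_mul [DecidableEq ι] {B : ι → ι → R} {x y : ι →₀ R} {i₀ j₀ : ι}
    (hB : ∀ i ∈ x.support, ∀ j ∈ y.support, B i j = if i = i₀ ∧ j = j₀ then 1 else 0) :
    bilinOfGram B x y = x i₀ * y j₀ :=
  calc bilinOfGram B x y
      = x.sum fun i r => y.sum fun j s =>
          (if i = i₀ then r else 0) * (if j = j₀ then s else 0) := by
        rw [bilinOfGram_apply]
        refine Finsupp.sum_congr fun i hi => Finsupp.sum_congr fun j hj => ?_
        rw [hB i hi j hj]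
        split_ifs <;> simp_all
    _ = (x.sum fun i r => if i = i₀ then r else 0) * y.sum fun j s => if j = j₀ then s else 0 := by
        simp only [Finsupp.sum, Finset.sum_mul_sum]
    _ = x i₀ * y j₀ := by rw [Finsupp.sum_ite_self_eq', Finsupp.sum_ite_self_eq']

theorem bilinOfGram_eq_mul_of_subset_range [DecidableEq ι] {B : ι → ι → R} {x y : ι →₀ R}
    {m n : ℕ} {a : Fin m → ι} {b : Fin n → ι} (ha : Function.Injective a)
    (hb : Function.Injective b) (hx : ↑x.support ⊆ Set.range a) (hy : ↑y.support ⊆ Set.range b)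
    {p : Fin m} {q : Fin n} (hB : ∀ ζ₁ ζ₂, B (a ζ₁) (b ζ₂) = if ζ₁ = p ∧ ζ₂ = q then 1 else 0) :
    bilinOfGram B x y = x (a p) * y (b q) := by
  refine bilinOfGram_eq_mul fun i hi j hj => ?_
  obtain ⟨ζ₁, rfl⟩ := hx hi
  obtain ⟨ζ₂, rfl⟩ := hy hj
  simp only [hB, ha.eq_iff, hb.eq_iff]

end Gram

theorem Submodule.exists_mem_ne_zero_vanishing_of_lt_rank {ι : Type u} {F : Type v} [Field F]
    (V : Submodule F (ι →₀ F)) (s : Set ι) (hs : Cardinal.lift.{v} #s < Module.rank F V) :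
    ∃ x ∈ V, x ≠ 0 ∧ ∀ i ∈ s, x i = 0 := by
  by_contra! h
  have hinj : Function.Injective ((Finsupp.lsubtypeDomain s).comp V.subtype) := by
    refine (injective_iff_map_eq_zero _).2 fun x hx => Subtype.ext ?_
    by_contra hne
    obtain ⟨i, hi, hxi⟩ := h x x.2 hne
    exact hxi (DFunLike.congr_fun hx ⟨i, hi⟩)
  have hrank := LinearMap.rank_le_of_injective _ hinj
  rw [rank_finsupp_self] at hrank
  exact (hrank.trans_lt hs).false

section Regular

variable {κ : Cardinal.{u}}

theorem mk_Iio_lt_lift (γ : {o : Ordinal.{u} // o < κ.ord}) :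
    #(Set.Iio γ) < Cardinal.lift.{u + 1} κ :=
  calc #(Set.Iio γ) ≤ #(Set.Iio γ.1) :=
        mk_le_of_injective (f := fun i => ⟨i.1.1, i.2⟩) fun _ _ h =>
          Subtype.ext (Subtype.ext (congrArg Subtype.val h :))
    _ = Cardinal.lift.{u + 1} γ.1.card := mk_Iio_ordinal _
    _ < Cardinal.lift.{u + 1} κ := lift_lt.2 (lt_ord.1 γ.2)

theorem exists_mem_ne_zero_support_ge {F : Type v} [Field F]
    {V : Submodule F ({o : Ordinal.{u} // o < κ.ord} →₀ F)}
    (hV : Cardinal.lift.{max (u + 1) v} κ ≤ Module.rank F V) (γ : {o : Ordinal.{u} // o < κ.ord}) :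
    ∃ x ∈ V, x ≠ 0 ∧ ∀ i ∈ x.support, γ ≤ i := by
  have hγ : Cardinal.lift.{v} #(Set.Iio γ) < Module.rank F V := by
    refine lt_of_lt_of_le ?_ hV
    simpa using Cardinal.lift_strictMono.{_, v} (mk_Iio_lt_lift γ)
  obtain ⟨x, hxV, hx0, hx⟩ := V.exists_mem_ne_zero_vanishing_of_lt_rank _ hγ
  exact ⟨x, hxV, hx0, fun i hi => not_lt.1 fun hlt => Finsupp.mem_support_iff.1 hi (hx i hlt)⟩

theorem Cardinal.IsRegular.exists_isCofinal_preimage_singleton (hκ : κ.IsRegular) {D : Type v}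
    (hD : Cardinal.lift.{u} #D < Cardinal.lift.{v} κ) (f : {o : Ordinal.{u} // o < κ.ord} → D) :
    ∃ d, IsCofinal (f ⁻¹' {d}) := by
  by_contra! h
  simp only [IsCofinal, Set.mem_preimage, Set.mem_singleton_iff, not_forall, not_exists,
    not_and, not_le] at h
  choose b hb using h
  have hsup : ⨆ d, (b d).1 < κ.ord :=
    Ordinal.lift_iSup_lt_of_lt_cof (by rwa [← Ordinal.lift_cof, hκ.cof_ord]) fun d => (b d).2
  have hbdd : BddAbove (Set.range fun d => (b d).1) :=
    ⟨κ.ord, by rintro _ ⟨d, rfl⟩; exact (b d).2.le⟩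
  exact (hb _ ⟨_, hsup⟩ rfl).not_ge (le_ciSup hbdd _)

theorem Cardinal.IsRegular.exists_seq_of_isCofinal (hκ : κ.IsRegular)
    {T : Set {o : Ordinal.{u} // o < κ.ord}} (hT : IsCofinal T)
    (B : {o : Ordinal.{u} // o < κ.ord} → {o : Ordinal.{u} // o < κ.ord}) :
    ∃ μ : {o : Ordinal.{u} // o < κ.ord} → {o : Ordinal.{u} // o < κ.ord},
      (∀ ν, μ ν ∈ T) ∧ ∀ ν ν', ν < ν' → B (μ ν) < μ ν' := by
  choose g hg hg_le using hT
  have hsup : ∀ (ν : {o : Ordinal.{u} // o < κ.ord})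
      (f : Set.Iio ν → {o : Ordinal.{u} // o < κ.ord}), ⨆ i, (f i).1 + 1 < κ.ord := fun ν f =>
    Ordinal.lift_iSup_add_one_lt_of_lt_cof
      (by rw [← Ordinal.lift_cof, hκ.cof_ord, Cardinal.lift_id'.{u, u + 1}]; exact mk_Iio_lt_lift ν)
      fun i => (f i).2
  let μ := wellFounded_lt.fix fun ν μ => g ⟨⨆ i : Set.Iio ν, (B (μ i i.2)).1 + 1, hsup ν _⟩
  have hμ : ∀ ν, μ ν = g ⟨⨆ i : Set.Iio ν, (B (μ i)).1 + 1, hsup ν _⟩ :=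
    wellFounded_lt.fix_eq _
  refine ⟨μ, fun ν => hμ ν ▸ hg _, fun ν ν' h => ?_⟩
  rw [hμ ν']
  refine lt_of_lt_of_le ?_ (hg_le _)
  have hbdd : BddAbove (Set.range fun i : Set.Iio ν' => (B (μ i)).1 + 1) :=
    ⟨κ.ord, by rintro _ ⟨i, rfl⟩; exact Order.add_one_le_of_lt (B (μ i)).2⟩
  show (B (μ ν)).1 < _
  exact (Order.lt_add_one_iff.2 le_rfl).trans_le (le_ciSup hbdd ⟨ν, h⟩)

theorem Cardinal.IsRegular.exists_separated_of_isCofinal (hκ : κ.IsRegular)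
    (s : {o : Ordinal.{u} // o < κ.ord} → Finset {o : Ordinal.{u} // o < κ.ord})
    (hs : ∀ γ, ∀ i ∈ s γ, γ ≤ i) {T : Set {o : Ordinal.{u} // o < κ.ord}} (hT : IsCofinal T) :
    ∃ μ : {o : Ordinal.{u} // o < κ.ord} → {o : Ordinal.{u} // o < κ.ord},
      (∀ ν, μ ν ∈ T) ∧ ∀ ν ν', ν < ν' → ∀ i ∈ s (μ ν), ∀ j ∈ s (μ ν'), i < j := by
  have hbound : ∀ γ, ∃ b, ∀ i ∈ s γ, i ≤ b := fun γ =>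
    have : Nonempty {o : Ordinal.{u} // o < κ.ord} := ⟨γ⟩
    (s γ).exists_le
  choose B hB using hbound
  obtain ⟨μ, hμ, hlt⟩ := hκ.exists_seq_of_isCofinal hT B
  exact ⟨μ, hμ, fun ν ν' h i hi j hj =>
    ((hB _ i hi).trans_lt (hlt ν ν' h)).trans_le (hs _ j hj)⟩

theorem injective_uncurry_of_forall_lt {α β γ : Type*} [LinearOrder α] [Preorder γ]
    {a : α → β → γ} (ha : ∀ ν, Function.Injective (a ν))
    (hlt : ∀ ν ν', ν < ν' → ∀ ζ ζ', a ν ζ < a ν' ζ') :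
    Function.Injective fun x : α × β => a x.1 x.2 := by
  rintro ⟨ν, ζ⟩ ⟨ν', ζ'⟩ h
  rcases lt_trichotomy ν ν' with hνν' | rfl | hνν'
  · exact absurd h (hlt _ _ hνν' _ _).ne
  · exact congrArg (Prod.mk ν) (ha ν h)
  · exact absurd h (hlt _ _ hνν' _ _).ne'

theorem Finset.exists_orderEmbOfFin_mem {α : Type*} [LinearOrder α] {s t : Finset α}
    (hts : t ⊆ s) (ht : t.Nonempty) : ∃ ζ, s.orderEmbOfFin rfl ζ ∈ t := by
  obtain ⟨x, hx⟩ := ht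
  obtain ⟨ζ, rfl⟩ : x ∈ Set.range (s.orderEmbOfFin rfl) := by
    rw [range_orderEmbOfFin]
    exact hts hx
  exact ⟨ζ, hx⟩

theorem Cardinal.IsRegular.exists_separated_blocks (hκ : κ.IsRegular) (hκ₀ : ℵ₀ < κ)
    (X Y : {o : Ordinal.{u} // o < κ.ord} → Finset {o : Ordinal.{u} // o < κ.ord})
    (hX : ∀ γ, (X γ).Nonempty) (hY : ∀ γ, (Y γ).Nonempty)
    (hge : ∀ γ, ∀ i ∈ X γ ∪ Y γ, γ ≤ i) :
    ∃ (n : ℕ) (a : {o : Ordinal.{u} // o < κ.ord} → Fin n → {o : Ordinal.{u} // o < κ.ord})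
      (μ : {o : Ordinal.{u} // o < κ.ord} → {o : Ordinal.{u} // o < κ.ord}) (p q : Fin n),
      (∀ ν, StrictMono (a ν)) ∧ Function.Injective (fun x : _ × Fin n => a x.1 x.2) ∧
      (∀ ν, ↑(X (μ ν)) ⊆ Set.range (a ν)) ∧ (∀ ν, ↑(Y (μ ν)) ⊆ Set.range (a ν)) ∧
      (∀ ν, a ν p ∈ X (μ ν)) ∧ ∀ ν, a ν q ∈ Y (μ ν) := by
  classical
  set s := fun γ => X γ ∪ Y γ
  choose ζx hζx using fun γ =>
    Finset.exists_orderEmbOfFin_mem (s := s γ) Finset.subset_union_left (hX γ)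
  choose ζy hζy using fun γ =>
    Finset.exists_orderEmbOfFin_mem (s := s γ) Finset.subset_union_right (hY γ)
  have hD : Cardinal.lift.{u} #(ℕ × ℕ × ℕ) < Cardinal.lift.{0} κ := by simpa using hκ₀
  obtain ⟨⟨n, p, q⟩, hfib⟩ := hκ.exists_isCofinal_preimage_singleton hD
    fun γ => ((s γ).card, (ζx γ : ℕ), (ζy γ : ℕ))
  obtain ⟨μ, hμ, hsep⟩ := hκ.exists_separated_of_isCofinal s hge hfib
  simp only [Set.mem_preimage, Set.mem_singleton_iff, Prod.mk.injEq] at hμ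
  let a ν : Fin n → {o : Ordinal.{u} // o < κ.ord} :=
    (s (μ ν)).orderEmbOfFin rfl ∘ Fin.cast (hμ ν).1.symm
  have ha_mono : ∀ ν, StrictMono (a ν) := fun ν =>
    (Finset.orderEmbOfFin _ rfl).strictMono.comp (Fin.castOrderIso (hμ ν).1.symm).strictMono
  have ha_eq : ∀ ν (k : Fin n) (ζ : Fin (s (μ ν)).card), (ζ : ℕ) = k →
      a ν k = (s (μ ν)).orderEmbOfFin rfl ζ := fun ν _ _ h =>
        congrArg ((s (μ ν)).orderEmbOfFin rfl) (Fin.ext h.symm)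
  have ha_range : ∀ ν, ↑(s (μ ν)) ⊆ Set.range (a ν) := fun ν i hi => by
    obtain ⟨ζ, rfl⟩ : i ∈ Set.range ((s (μ ν)).orderEmbOfFin rfl) := by
      rwa [Finset.range_orderEmbOfFin]
    exact ⟨Fin.cast (hμ ν).1 ζ, ha_eq ν _ ζ rfl⟩
  obtain ⟨hn, hpx, hqy⟩ := hμ ⟨0, hκ.ord_pos⟩
  have hp : p < n := hpx ▸ hn ▸ (ζx _).2
  have hq : q < n := hqy ▸ hn ▸ (ζy _).2
  refine ⟨n, a, μ, ⟨p, hp⟩, ⟨q, hq⟩, ha_mono,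
    injective_uncurry_of_forall_lt (fun ν => (ha_mono ν).injective) fun ν ν' h ζ ζ' =>
      hsep ν ν' h _ (Finset.orderEmbOfFin_mem _ rfl _) _ (Finset.orderEmbOfFin_mem _ rfl _),
    fun ν => (Finset.coe_subset.2 Finset.subset_union_left).trans (ha_range ν),
    fun ν => (Finset.coe_subset.2 Finset.subset_union_right).trans (ha_range ν),
    fun ν => ?_, fun ν => ?_⟩
  · exact (ha_eq ν ⟨p, hp⟩ _ (hμ ν).2.1).symm ▸ hζx (μ ν)
  · exact (ha_eq ν ⟨q, hq⟩ _ (hμ ν).2.2).symm ▸ hζy (μ ν)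

end Regular

theorem gross_space_of_Pr0_general (lam : Cardinal.{0})
    (hunc : Cardinal.aleph0 < lam)
    (F : Type) [Field F]
    (c : {o : Ordinal // o < (Order.succ lam).ord} →
         {o : Ordinal // o < (Order.succ lam).ord} → Fin 2)
    (hsym : ∀ α β, c α β = c β α)
    (hPr0 : ∀ (ξ : ℕ)
        (a : {o : Ordinal // o < (Order.succ lam).ord} → Fin ξ →
             {o : Ordinal // o < (Order.succ lam).ord}),
        (∀ ν, StrictMono (a ν)) →
        Function.Injective (fun p : {o : Ordinal // o < (Order.succ lam).ord} × Fin ξ =>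
          a p.1 p.2) →
        ∀ h : Fin ξ → Fin ξ → Fin 2,
          ∃ ν₁ ν₂, ν₁ < ν₂ ∧ ∀ ζ₁ ζ₂ : Fin ξ, c (a ν₁ ζ₁) (a ν₂ ζ₂) = h ζ₁ ζ₂) :
    ∃ Φ : ({o : Ordinal // o < (Order.succ lam).ord} →₀ F) →ₗ[F]
          ({o : Ordinal // o < (Order.succ lam).ord} →₀ F) →ₗ[F] F,
      (∀ x y, Φ x y = Φ y x) ∧
      (∀ α β, α ≠ β →
        Φ (Finsupp.single α 1) (Finsupp.single β 1) =
          (if c α β = 0 then (0 : F) else 1)) ∧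
      ∀ U : Submodule F ({o : Ordinal // o < (Order.succ lam).ord} →₀ F),
        Cardinal.lift.{1} (Order.succ lam) ≤ Module.rank F U →
        Module.rank F (ortho Φ U) < Cardinal.lift.{1} (Order.succ lam) := by
  classical
  have hκ : (Order.succ lam).IsRegular := isRegular_succ hunc.le
  refine ⟨bilinOfGram fun α β => if c α β = 0 then (0 : F) else 1,
    bilinOfGram_comm fun α β => by rw [hsym], fun α β _ => by simp, fun U hU => ?_⟩
  by_contra! hW
  choose u hu using exists_mem_ne_zero_support_ge hU
  choose w hw using exists_mem_ne_zero_support_ge hW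
  obtain ⟨n, a, μ, p, q, ha_mono, ha_inj, hw_sub, hu_sub, hp, hq⟩ :=
    hκ.exists_separated_blocks (hunc.trans (Order.lt_succ lam)) (fun γ => (w γ).support)
      (fun γ => (u γ).support) (fun γ => Finsupp.support_nonempty_iff.2 (hw γ).2.1)
      (fun γ => Finsupp.support_nonempty_iff.2 (hu γ).2.1)
      fun γ i hi => (Finset.mem_union.1 hi).elim ((hw γ).2.2 i) ((hu γ).2.2 i)
  obtain ⟨ν₁, ν₂, -, hc⟩ := hPr0 n a ha_mono ha_inj fun ζ₁ ζ₂ => if ζ₁ = p ∧ ζ₂ = q then 1 else 0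
  have hpair := bilinOfGram_eq_mul_of_subset_range
    (B := fun α β => if c α β = 0 then (0 : F) else 1) (p := p) (q := q)
    (ha_mono ν₁).injective (ha_mono ν₂).injective (hw_sub ν₁) (hu_sub ν₂) fun ζ₁ ζ₂ => by
      by_cases h : ζ₁ = p ∧ ζ₂ = q <;> simp [hc, h]
  exact mul_ne_zero (Finsupp.mem_support_iff.1 (hp ν₁)) (Finsupp.mem_support_iff.1 (hq ν₂))
    (hpair ▸ (hw _).1 _ (hu _).1)

/-- From a colouring witnessing Pr₀(λ⁺, λ⁺, 2, ω) (λ regular uncountable), the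
bilinear form defined on the basis by the colours yields a λ⁺-Gross space of
dimension λ⁺ over any field of size at most λ. -/
theorem gross_space_of_Pr0 (lam : Cardinal.{0})
    (hreg : lam.IsRegular) (hunc : Cardinal.aleph0 < lam)
    (F : Type) [Field F] (hF : Cardinal.mk F ≤ lam)
    (c : {o : Ordinal // o < (Order.succ lam).ord} →
         {o : Ordinal // o < (Order.succ lam).ord} → Fin 2)
    (hsym : ∀ α β, c α β = c β α)
    (hPr0 : ∀ (ξ : ℕ)
        (a : {o : Ordinal // o < (Order.succ lam).ord} → Fin ξ →
             {o : Ordinal // o < (Order.succ lam).ord}),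
        (∀ ν, StrictMono (a ν)) →
        Function.Injective (fun p : {o : Ordinal // o < (Order.succ lam).ord} × Fin ξ =>
          a p.1 p.2) →
        ∀ h : Fin ξ → Fin ξ → Fin 2,
          ∃ ν₁ ν₂, ν₁ < ν₂ ∧ ∀ ζ₁ ζ₂ : Fin ξ, c (a ν₁ ζ₁) (a ν₂ ζ₂) = h ζ₁ ζ₂) :
    ∃ Φ : ({o : Ordinal // o < (Order.succ lam).ord} →₀ F) →ₗ[F]
          ({o : Ordinal // o < (Order.succ lam).ord} →₀ F) →ₗ[F] F,
      (∀ x y, Φ x y = Φ y x) ∧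
      (∀ α β, α ≠ β →
        Φ (Finsupp.single α 1) (Finsupp.single β 1) =
          (if c α β = 0 then (0 : F) else 1)) ∧
      ∀ U : Submodule F ({o : Ordinal // o < (Order.succ lam).ord} →₀ F),
        Cardinal.lift.{1} (Order.succ lam) ≤ Module.rank F U →
        Module.rank F (ortho Φ U) < Cardinal.lift.{1} (Order.succ lam) :=
  gross_space_of_Pr0_general lam hunc F c hsym hPr0
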